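/- arXiv:1603.04191 — 2 statements merged into one kernel-verified Lean document; each statement's English description precedes it below -/
import Mathlib

section
/- Let Q be a quiver with finitely many vertices such that all singular vertices lie in Q'⁰ ⊆ Q⁰ and every cycle meets Q'⁰. Let Q' be the quiver with vertex set Q'⁰ and one edge e_μ for each path μ ∈ ⋃_{v∈Q'⁰} B_v, with s(e_μ) = s(μ) and r(e_μ) = r(μ). Then in the Leavitt path algebra L_k(Q), the assignments q_v = v for v ∈ Q'⁰ and T_{e_μ} = μ (the product of the edges of μ) form a Cuntz-Krieger Q'-family. -/
structure Qvr where
  V : Type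
  E : Type
  s : E → V
  r : E → V

namespace Qvr

variable (Q : Qvr)

/-- A finite list of edges is a path if consecutive edges are composable. -/
def IsPath (μ : List Q.E) : Prop :=
  μ.Chain' (fun e f => Q.r e = Q.s f)

/-- The source of a nonempty path. -/
def pathSrc (μ : List Q.E) (h : μ ≠ []) : Q.V :=
  Q.s (μ.head h)

/-- The range of a nonempty path. -/
def pathRng (μ : List Q.E) (h : μ ≠ []) : Q.V :=
  Q.r (μ.getLast h)

/-- A cycle is a nonempty closed path with pairwise distinct sources of its edges. -/
def IsCycle (μ : List Q.E) : Prop :=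
  ∃ h : μ ≠ [], Q.IsPath μ ∧ Q.pathRng μ h = Q.pathSrc μ h ∧ (μ.map Q.s).Nodup

/-- Every cycle of `Q` passes through a vertex of `W`. -/
def CyclesMeet (W : Set Q.V) : Prop :=
  ∀ μ : List Q.E, Q.IsCycle μ → ∃ e ∈ μ, Q.s e ∈ W

/-- A sink is a vertex emitting no edges. -/
def IsSink (v : Q.V) : Prop := ∀ e : Q.E, Q.s e ≠ v

/-- A regular vertex emits at least one and only finitely many edges. -/
def IsRegular (v : Q.V) : Prop :=
  {e : Q.E | Q.s e = v}.Nonempty ∧ {e : Q.E | Q.s e = v}.Finite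

end Qvr

namespace Qvr

/-- `μ` is a defining path for the Crisp–Gow reduction relative to `W`: a nonempty path
whose source and range lie in `W` and all of whose intermediate range vertices lie
outside `W`. -/
structure IsCGPath (Q : Qvr) (W : Set Q.V) (μ : List Q.E) : Prop where
  ne : μ ≠ []
  path : Q.IsPath μ
  src_mem : Q.pathSrc μ ne ∈ W
  rng_mem : Q.pathRng μ ne ∈ W
  mid : ∀ i : Fin μ.length, (i : ℕ) + 1 < μ.length → Q.r (μ.get i) ∉ W

/-- The Crisp–Gow reduction of `Q` relative to `W ⊆ Q⁰`: vertices are the elements of `W`,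
and there is one edge `e_μ` for every path `μ` of `Q` with source and range in `W` and all
intermediate range vertices outside `W`. -/
@[reducible] def CGred (Q : Qvr) (W : Set Q.V) : Qvr where
  V := {v : Q.V // v ∈ W}
  E := {μ : List Q.E // Q.IsCGPath W μ}
  s := fun μ => ⟨Q.pathSrc μ.1 μ.2.ne, μ.2.src_mem⟩
  r := fun μ => ⟨Q.pathRng μ.1 μ.2.ne, μ.2.rng_mem⟩

end Qvr

/-- A Cuntz–Krieger `Q`-family in a ring `A`: pairwise orthogonal idempotents indexed by
vertices, together with elements `X e` (edges) and `Y e` (ghost edges) satisfying the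
Cuntz–Krieger relations. -/
structure IsQFamily (Q : Qvr) [DecidableEq Q.V] [DecidableEq Q.E] {A : Type} [Ring A]
    (P : Q.V → A) (X Y : Q.E → A) : Prop where
  orth : ∀ v w : Q.V, P v * P w = if v = w then P v else 0
  src_mul : ∀ e : Q.E, P (Q.s e) * X e = X e
  mul_rng : ∀ e : Q.E, X e * P (Q.r e) = X e
  rng_mul : ∀ e : Q.E, P (Q.r e) * Y e = Y e
  mul_src : ∀ e : Q.E, Y e * P (Q.s e) = Y e
  ck1 : ∀ e f : Q.E, Y e * X f = if e = f then P (Q.r e) else 0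
  ck2 : ∀ (v : Q.V) (h : {e : Q.E | Q.s e = v}.Finite), {e : Q.E | Q.s e = v}.Nonempty →
    P v = ∑ e ∈ h.toFinset, X e * Y e

/-- The element of `A` corresponding to a path (product of the edge elements). -/
def pathProd {Q : Qvr} {A : Type} [Ring A] (X : Q.E → A) (μ : List Q.E) : A :=
  (μ.map X).prod

/-- The element of `A` corresponding to the ghost path `μ*` (product of the ghost edge
elements in reverse order). -/
def pathStar {Q : Qvr} {A : Type} [Ring A] (Y : Q.E → A) (μ : List Q.E) : A :=
  (μ.reverse.map Y).prod

/-- Generators of the Leavitt path algebra: vertices, edges and ghost edges. -/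
inductive LGen (Q : Qvr) : Type
  | vert : Q.V → LGen Q
  | edge : Q.E → LGen Q
  | ghost : Q.E → LGen Q

/-- The canonical generators inside the free algebra. -/
def lgen (k : Type) [Field k] (Q : Qvr) (x : LGen Q) : FreeAlgebra k (LGen Q) :=
  FreeAlgebra.ι k x

/-- The defining relations of the Leavitt path algebra of a quiver with finitely many
vertices: the vertices are pairwise orthogonal idempotents summing to `1`, together with
the path algebra relations and the Cuntz–Krieger relations (CK-2 imposed at regular
vertices). -/
inductive LRel (k : Type) [Field k] (Q : Qvr) [Fintype Q.V] :
    FreeAlgebra k (LGen Q) → FreeAlgebra k (LGen Q) → Prop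
  | orth (v w : Q.V) (h : v ≠ w) :
      LRel k Q (lgen k Q (.vert v) * lgen k Q (.vert w)) 0
  | idem (v : Q.V) :
      LRel k Q (lgen k Q (.vert v) * lgen k Q (.vert v)) (lgen k Q (.vert v))
  | src_edge (e : Q.E) :
      LRel k Q (lgen k Q (.vert (Q.s e)) * lgen k Q (.edge e)) (lgen k Q (.edge e))
  | edge_rng (e : Q.E) :
      LRel k Q (lgen k Q (.edge e) * lgen k Q (.vert (Q.r e))) (lgen k Q (.edge e))
  | rng_ghost (e : Q.E) :
      LRel k Q (lgen k Q (.vert (Q.r e)) * lgen k Q (.ghost e)) (lgen k Q (.ghost e))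
  | ghost_src (e : Q.E) :
      LRel k Q (lgen k Q (.ghost e) * lgen k Q (.vert (Q.s e))) (lgen k Q (.ghost e))
  | ck1_eq (e : Q.E) :
      LRel k Q (lgen k Q (.ghost e) * lgen k Q (.edge e)) (lgen k Q (.vert (Q.r e)))
  | ck1_ne (e f : Q.E) (h : e ≠ f) :
      LRel k Q (lgen k Q (.ghost e) * lgen k Q (.edge f)) 0
  | ck2 (v : Q.V) (h : {e : Q.E | Q.s e = v}.Finite) (hne : {e : Q.E | Q.s e = v}.Nonempty) :
      LRel k Q (lgen k Q (.vert v)) (∑ e ∈ h.toFinset, lgen k Q (.edge e) * lgen k Q (.ghost e))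
  | unit : LRel k Q 1 (∑ v : Q.V, lgen k Q (.vert v))

/-- The Leavitt path algebra of `Q` with coefficients in `k`. -/
def LPA (k : Type) [Field k] (Q : Qvr) [Fintype Q.V] : Type :=
  RingQuot (LRel k Q)

noncomputable instance (k : Type) [Field k] (Q : Qvr) [Fintype Q.V] : Ring (LPA k Q) :=
  inferInstanceAs (Ring (RingQuot (LRel k Q)))

noncomputable instance (k : Type) [Field k] (Q : Qvr) [Fintype Q.V] : Algebra k (LPA k Q) :=
  inferInstanceAs (Algebra k (RingQuot (LRel k Q)))

/-- The vertex idempotent `v ∈ L_k(Q)`. -/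
noncomputable def lv (k : Type) [Field k] (Q : Qvr) [Fintype Q.V] (v : Q.V) : LPA k Q :=
  RingQuot.mkAlgHom k (LRel k Q) (lgen k Q (.vert v))

/-- The edge generator `e ∈ L_k(Q)`. -/
noncomputable def le (k : Type) [Field k] (Q : Qvr) [Fintype Q.V] (e : Q.E) : LPA k Q :=
  RingQuot.mkAlgHom k (LRel k Q) (lgen k Q (.edge e))

/-- The ghost edge generator `e* ∈ L_k(Q)`. -/
noncomputable def lg (k : Type) [Field k] (Q : Qvr) [Fintype Q.V] (e : Q.E) : LPA k Q :=
  RingQuot.mkAlgHom k (LRel k Q) (lgen k Q (.ghost e))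

/-!
The relations for `Q'` involving the vertices only use that `μ` runs from `s(μ)` to `r(μ)`.
For (CK1), `μ* ν` telescopes edge by edge, and two distinct paths of `B = ⋃ B_v` diverge at some
edge because neither is a proper prefix of the other: the intermediate ranges of a path in `B`
avoid `Q'⁰` while its range lies in `Q'⁰`. For (CK2) at `v ∈ Q'⁰`, expand `v = Σ e e*` in `Q`
and keep replacing `r(e) = Σ f f*` as long as the range lies outside `Q'⁰`, where all vertices
are regular. Since every cycle meets `Q'⁰`, paths outside `Q'⁰` have at most `|Q⁰|` edges, so the
expansion stops, and the surviving terms are exactly the `μ μ*` with `μ ∈ B_v`. The argument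
works for every Cuntz–Krieger `Q`-family, in particular for the canonical one in `L_k(Q)`.
-/

theorem List.forall_get_iff_forall_mem_dropLast {α : Type*} {p : α → Prop} {l : List α} :
    (∀ i : Fin l.length, (i : ℕ) + 1 < l.length → p (l.get i)) ↔ ∀ x ∈ l.dropLast, p x := by
  simp only [List.mem_iff_getElem, List.length_dropLast, List.getElem_dropLast,
    List.get_eq_getElem]
  constructor
  · rintro h x ⟨i, hi, rfl⟩
    exact h ⟨i, by omega⟩ (by simp; omega)
  · intro h i hi
    exact h _ ⟨i, by omega, rfl⟩

theorem Finset.sum_biUnion_image_cons {α M : Type*} [DecidableEq α] [AddCommMonoid M]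
    (s : Finset α) (t : α → Finset (List α)) (f : List α → M) :
    ∑ μ ∈ s.biUnion (fun e => (t e).image (List.cons e)), f μ =
      ∑ e ∈ s, ∑ ν ∈ t e, f (e :: ν) := by
  rw [Finset.sum_biUnion]
  · exact Finset.sum_congr rfl fun e _ =>
      Finset.sum_image fun _ _ _ _ h => List.cons_injective h
  · intro e _ e' _ hne
    simp only [Function.onFun, Finset.disjoint_left, Finset.mem_image]
    rintro _ ⟨ν, -, rfl⟩ ⟨ν', -, h⟩
    exact hne (List.cons_eq_cons.1 h).1.symm

namespace Qvr

variable {Q : Qvr} {W : Set Q.V}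

@[simp] theorem pathSrc_cons (e : Q.E) (μ : List Q.E) (h : e :: μ ≠ []) :
    Q.pathSrc (e :: μ) h = Q.s e := rfl

@[simp] theorem pathRng_singleton (e : Q.E) (h : [e] ≠ []) : Q.pathRng [e] h = Q.r e := rfl

@[simp] theorem pathRng_cons_cons (e f : Q.E) (μ : List Q.E) (h : e :: f :: μ ≠ []) :
    Q.pathRng (e :: f :: μ) h = Q.pathRng (f :: μ) (List.cons_ne_nil f μ) := rfl

@[simp] theorem isPath_singleton (e : Q.E) : Q.IsPath [e] := List.isChain_singleton e

@[simp] theorem isPath_cons_cons {e f : Q.E} {μ : List Q.E} :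
    Q.IsPath (e :: f :: μ) ↔ Q.r e = Q.s f ∧ Q.IsPath (f :: μ) :=
  List.isChain_cons_cons

def IsClosedPath (Q : Qvr) (β : List Q.E) : Prop :=
  ∃ h : β ≠ [], Q.IsPath β ∧ Q.pathRng β h = Q.pathSrc β h

/-- The segment of `μ` between two edges with the same source is closed. -/
theorem exists_isClosedPath_infix :
    ∀ {μ : List Q.E}, Q.IsPath μ → ¬ (μ.map Q.s).Nodup →
      ∃ β, Q.IsClosedPath β ∧ β <:+: μ ∧ β.length < μ.length
  | [], _, hnd => absurd List.nodup_nil hnd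
  | e :: t, hμ, hnd => by
    rw [List.map_cons, List.nodup_cons, not_and_or, not_not] at hnd
    rcases hnd with hdup | hnd
    · obtain ⟨f, hf, hsf⟩ := List.mem_map.1 hdup
      obtain ⟨t₁, t₂, rfl⟩ := List.append_of_mem hf
      have hpre : e :: t₁ <+: e :: (t₁ ++ f :: t₂) := ⟨f :: t₂, rfl⟩
      have hjoin := ((List.isChain_append (l₁ := e :: t₁)).1 hμ).2.2
      refine ⟨e :: t₁, ⟨List.cons_ne_nil _ _, hμ.infix hpre.isInfix, ?_⟩, hpre.isInfix, by simp⟩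
      rw [pathSrc_cons, ← hsf]
      exact hjoin _ (List.getLast?_eq_some_getLast (List.cons_ne_nil e t₁)) f rfl
    · obtain ⟨β, hβ, hinf, hlen⟩ := exists_isClosedPath_infix (List.isChain_cons.1 hμ).2 hnd
      exact ⟨β, hβ, List.infix_cons hinf, by simp; omega⟩

theorem CyclesMeet.exists_src_mem_of_isClosedPath (hcyc : Q.CyclesMeet W) {β : List Q.E}
    (hβ : Q.IsClosedPath β) : ∃ e ∈ β, Q.s e ∈ W := by
  induction hlen : β.length using Nat.strong_induction_on generalizing β with
  | _ n ih =>
  obtain ⟨hne, hpath, hclosed⟩ := hβ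
  by_cases hnd : (β.map Q.s).Nodup
  · exact hcyc β ⟨hne, hpath, hclosed, hnd⟩
  · obtain ⟨γ, hγ, hinf, hlt⟩ := exists_isClosedPath_infix hpath hnd
    obtain ⟨e, he, heW⟩ := ih _ (hlen ▸ hlt) hγ rfl
    exact ⟨e, hinf.subset he, heW⟩

theorem CyclesMeet.length_le_card [Fintype Q.V] (hcyc : Q.CyclesMeet W) {μ : List Q.E}
    (hμ : Q.IsPath μ) (hout : ∀ e ∈ μ, Q.s e ∉ W) : μ.length ≤ Fintype.card Q.V := by
  by_contra hlong
  have hnd : ¬ (μ.map Q.s).Nodup := fun hnd => hlong (by simpa using hnd.length_le_card)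
  obtain ⟨β, hβ, hinf, -⟩ := exists_isClosedPath_infix hμ hnd
  obtain ⟨e, he, heW⟩ := hcyc.exists_src_mem_of_isClosedPath hβ
  exact hout e (hinf.subset he) heW

theorem exists_isPath_length_eq {bad : Q.V → Prop}
    (hbad : ∀ u, bad u → ∃ e, Q.s e = u ∧ bad (Q.r e)) :
    ∀ (n : ℕ) (u : Q.V), bad u → ∃ μ : List Q.E, μ.length = n ∧ Q.IsPath μ ∧
      (∀ f ∈ μ.head?, Q.s f = u) ∧ ∀ e ∈ μ, bad (Q.s e)
  | 0, _, _ => ⟨[], rfl, List.isChain_nil, by simp, by simp⟩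
  | n + 1, u, hu => by
    obtain ⟨e, rfl, he⟩ := hbad u hu
    obtain ⟨μ, hlen, hμ, hsrc, hμbad⟩ := exists_isPath_length_eq hbad n _ he
    refine ⟨e :: μ, by simp [hlen], List.isChain_cons.2 ⟨fun f hf => (hsrc f hf).symm, hμ⟩,
      by simp, ?_⟩
    simpa [hu] using hμbad

/-- An infinite descent through vertices violating `motive` would be a path of unbounded
length outside `W`. -/
theorem CyclesMeet.induction [Fintype Q.V] (hcyc : Q.CyclesMeet W) {motive : Q.V → Prop}
    (mem : ∀ u ∈ W, motive u)
    (notMem : ∀ u ∉ W, (∀ e, Q.s e = u → motive (Q.r e)) → motive u) (u : Q.V) : motive u := by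
  by_contra hu
  have hstep : ∀ v, ¬ motive v → ∃ e, Q.s e = v ∧ ¬ motive (Q.r e) := by
    intro v hv
    by_contra! h
    exact hv (notMem v (fun hvW => hv (mem v hvW)) h)
  obtain ⟨μ, hlen, hμ, -, hμbad⟩ := exists_isPath_length_eq hstep (Fintype.card Q.V + 1) u hu
  have := hcyc.length_le_card hμ fun e he heW => hμbad e he (mem _ heW)
  omega

/-- `Q.IsFirstHitPath W u w ν`: `ν` is a path from `u` to `w ∈ W` whose vertices before `w`
all lie outside `W`; it is empty exactly when `u ∈ W`. The paths in `B_v` are the `e :: ν` with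
`s e = v` and `ν` first-hitting from `r e`. -/
def IsFirstHitPath (Q : Qvr) (W : Set Q.V) : Q.V → Q.V → List Q.E → Prop
  | u, w, [] => u = w ∧ w ∈ W
  | u, w, e :: ν => Q.s e = u ∧ u ∉ W ∧ Q.IsFirstHitPath W (Q.r e) w ν

@[simp] theorem isFirstHitPath_nil {u w : Q.V} : Q.IsFirstHitPath W u w [] ↔ u = w ∧ w ∈ W :=
  Iff.rfl

@[simp] theorem isFirstHitPath_cons {u w : Q.V} {e : Q.E} {ν : List Q.E} :
    Q.IsFirstHitPath W u w (e :: ν) ↔ Q.s e = u ∧ u ∉ W ∧ Q.IsFirstHitPath W (Q.r e) w ν :=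
  Iff.rfl

theorem isFirstHitPath_iff_isPath_cons {e : Q.E} {w : Q.V} :
    ∀ {ν : List Q.E}, Q.IsFirstHitPath W (Q.r e) w ν ↔
      Q.IsPath (e :: ν) ∧ Q.pathRng (e :: ν) (List.cons_ne_nil e ν) = w ∧ w ∈ W ∧
        ∀ x ∈ (e :: ν).dropLast, Q.r x ∉ W
  | [] => by simp
  | f :: ν => by
    rw [isFirstHitPath_cons, isFirstHitPath_iff_isPath_cons, isPath_cons_cons,
      pathRng_cons_cons, List.dropLast_cons_cons, List.forall_mem_cons]
    constructor
    · rintro ⟨hs, hr, hp, hrng, hw, hmid⟩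
      exact ⟨⟨hs.symm, hp⟩, hrng, hw, hs ▸ hr, hmid⟩
    · rintro ⟨⟨hs, hp⟩, hrng, hw, hr, hmid⟩
      exact ⟨hs.symm, hr, hp, hrng, hw, hmid⟩

theorem isCGPath_cons_iff {e : Q.E} {ν : List Q.E} :
    Q.IsCGPath W (e :: ν) ↔
      Q.s e ∈ W ∧ Q.IsFirstHitPath W (Q.r e) (Q.pathRng (e :: ν) (List.cons_ne_nil e ν)) ν := by
  rw [isFirstHitPath_iff_isPath_cons, ← List.forall_get_iff_forall_mem_dropLast]
  constructor
  · rintro ⟨_, hp, hs, hr, hmid⟩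
    exact ⟨hs, hp, rfl, hr, hmid⟩
  · rintro ⟨hs, hp, -, hr, hmid⟩
    exact ⟨List.cons_ne_nil e ν, hp, hs, hr, hmid⟩

theorem IsFirstHitPath.pathRng_cons {e : Q.E} {w : Q.V} {ν : List Q.E}
    (h : Q.IsFirstHitPath W (Q.r e) w ν) : Q.pathRng (e :: ν) (List.cons_ne_nil e ν) = w :=
  (isFirstHitPath_iff_isPath_cons.1 h).2.1

def firstHitSet (Q : Qvr) (W : Set Q.V) (u : Q.V) : Set (List Q.E) :=
  {ν | ∃ w, Q.IsFirstHitPath W u w ν}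

theorem firstHitSet_of_mem {u : Q.V} (hu : u ∈ W) : Q.firstHitSet W u = {[]} := by
  ext (_ | ⟨e, ν⟩) <;> simp [firstHitSet, hu]

theorem firstHitSet_of_notMem {u : Q.V} (hu : u ∉ W) :
    Q.firstHitSet W u = ⋃ e ∈ {e | Q.s e = u}, List.cons e '' Q.firstHitSet W (Q.r e) := by
  ext (_ | ⟨e, ν⟩) <;> simp [firstHitSet, hu, and_comm]

theorem isCGPath_and_pathSrc_eq_iff {v : Q.V} (hv : v ∈ W) {μ : List Q.E} :
    (∃ h : Q.IsCGPath W μ, Q.pathSrc μ h.ne = v) ↔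
      ∃ e, Q.s e = v ∧ ∃ ν ∈ Q.firstHitSet W (Q.r e), e :: ν = μ := by
  rcases μ with _ | ⟨e, ν⟩
  · exact ⟨fun ⟨h, _⟩ => absurd rfl h.ne, by simp⟩
  · simp only [pathSrc_cons, List.cons.injEq]
    constructor
    · rintro ⟨h, rfl⟩
      exact ⟨e, rfl, ν, ⟨_, (isCGPath_cons_iff.1 h).2⟩, rfl, rfl⟩
    · rintro ⟨_, rfl, _, ⟨w, hν⟩, rfl, rfl⟩
      exact ⟨isCGPath_cons_iff.2 ⟨hv, hν.pathRng_cons ▸ hν⟩, rfl⟩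

variable [Fintype Q.V]

theorem finite_firstHitSet (hsing : ∀ v, v ∉ W → Q.IsRegular v) (hcyc : Q.CyclesMeet W)
    (u : Q.V) : (Q.firstHitSet W u).Finite := by
  induction u using hcyc.induction with
  | mem u hu => simp [firstHitSet_of_mem hu]
  | notMem u hu ih =>
    rw [firstHitSet_of_notMem hu]
    exact (hsing u hu).2.biUnion fun e he => (ih e he).image _

theorem nonempty_firstHitSet (hsing : ∀ v, v ∉ W → Q.IsRegular v) (hcyc : Q.CyclesMeet W)
    (u : Q.V) : (Q.firstHitSet W u).Nonempty := by
  induction u using hcyc.induction with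
  | mem u hu => simp [firstHitSet_of_mem hu]
  | notMem u hu ih =>
    obtain ⟨e, he⟩ := (hsing u hu).1
    obtain ⟨ν, hν⟩ := ih e he
    rw [firstHitSet_of_notMem hu]
    exact ⟨e :: ν, Set.mem_biUnion (x := e) he (Set.mem_image_of_mem _ hν)⟩

/-- Every edge out of `v` extends to a path in `B_v`. -/
theorem isRegular_of_finite_cgRed (hsing : ∀ v, v ∉ W → Q.IsRegular v)
    (hcyc : Q.CyclesMeet W) {v : (Q.CGred W).V} (h : {μ | (Q.CGred W).s μ = v}.Finite)
    (hne : {μ | (Q.CGred W).s μ = v}.Nonempty) : Q.IsRegular v.1 := by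
  obtain ⟨⟨μ, hμ⟩, hμv⟩ := hne
  refine ⟨⟨μ.head hμ.ne, congrArg Subtype.val hμv⟩,
    (h.image fun μ => μ.1.head μ.2.ne).subset fun e he => ?_⟩
  obtain ⟨ν, hν⟩ := nonempty_firstHitSet hsing hcyc (Q.r e)
  obtain ⟨hcg, hsrc⟩ := (isCGPath_and_pathSrc_eq_iff v.2).2 ⟨e, he, ν, hν, rfl⟩
  exact ⟨⟨e :: ν, hcg⟩, Subtype.ext hsrc, rfl⟩

end Qvr

open Qvr

section PathProducts

variable {Q : Qvr} {A : Type} [Ring A]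

@[simp] theorem pathProd_nil (X : Q.E → A) : pathProd X [] = 1 := rfl

@[simp] theorem pathProd_cons (X : Q.E → A) (e : Q.E) (μ : List Q.E) :
    pathProd X (e :: μ) = X e * pathProd X μ := List.prod_cons

@[simp] theorem pathStar_nil (Y : Q.E → A) : pathStar Y [] = 1 := rfl

@[simp] theorem pathStar_cons (Y : Q.E → A) (e : Q.E) (μ : List Q.E) :
    pathStar Y (e :: μ) = pathStar Y μ * Y e := by
  simp [pathStar]

variable [DecidableEq Q.V] [DecidableEq Q.E] {P : Q.V → A} {X Y : Q.E → A}

namespace IsQFamily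

theorem src_mul_pathProd (hF : IsQFamily Q P X Y) {μ : List Q.E} (h : μ ≠ []) :
    P (Q.pathSrc μ h) * pathProd X μ = pathProd X μ := by
  obtain ⟨e, μ, rfl⟩ := List.exists_cons_of_ne_nil h
  rw [pathProd_cons, ← mul_assoc, Qvr.pathSrc_cons, hF.src_mul]

theorem pathStar_mul_src (hF : IsQFamily Q P X Y) {μ : List Q.E} (h : μ ≠ []) :
    pathStar Y μ * P (Q.pathSrc μ h) = pathStar Y μ := by
  obtain ⟨e, μ, rfl⟩ := List.exists_cons_of_ne_nil h
  rw [pathStar_cons, mul_assoc, Qvr.pathSrc_cons, hF.mul_src]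

theorem pathProd_mul_rng (hF : IsQFamily Q P X Y) :
    ∀ {μ : List Q.E} (h : μ ≠ []), pathProd X μ * P (Q.pathRng μ h) = pathProd X μ
  | [e], _ => by simpa using hF.mul_rng e
  | e :: f :: μ, _ => by
    rw [pathProd_cons, mul_assoc, Qvr.pathRng_cons_cons, hF.pathProd_mul_rng]

theorem rng_mul_pathStar (hF : IsQFamily Q P X Y) :
    ∀ {μ : List Q.E} (h : μ ≠ []), P (Q.pathRng μ h) * pathStar Y μ = pathStar Y μ
  | [e], _ => by simpa using hF.rng_mul e
  | e :: f :: μ, _ => by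
    rw [pathStar_cons, ← mul_assoc, Qvr.pathRng_cons_cons, hF.rng_mul_pathStar]

variable {W : Set Q.V}

theorem pathStar_cons_mul_pathProd_cons (hF : IsQFamily Q P X Y) (e f : Q.E)
    (μ ν : List Q.E) : pathStar Y (e :: μ) * pathProd X (f :: ν) =
      if e = f then pathStar Y μ * P (Q.r e) * pathProd X ν else 0 := by
  rw [pathStar_cons, pathProd_cons, mul_assoc, ← mul_assoc (Y e), hF.ck1]
  split_ifs <;> simp [mul_assoc]

theorem pathStar_mul_mul_pathProd (hF : IsQFamily Q P X Y) :
    ∀ {μ ν : List Q.E} {u w w' : Q.V},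
      Q.IsFirstHitPath W u w μ → Q.IsFirstHitPath W u w' ν →
      pathStar Y μ * P u * pathProd X ν = if μ = ν then P w else 0
  | [], [], _, _, _, ⟨rfl, _⟩, _ => by simp
  | [], _ :: _, _, _, _, ⟨rfl, hw⟩, ⟨_, hu, _⟩ => absurd hw hu
  | _ :: _, [], _, _, _, ⟨_, hu, _⟩, ⟨rfl, hw⟩ => absurd hw hu
  | e :: μ, f :: ν, _, _, _, ⟨rfl, _, hμ⟩, ⟨hfe, _, hν⟩ => by
    rw [mul_assoc, ← hfe, pathProd_cons, ← mul_assoc (P _), hF.src_mul, ← pathProd_cons,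
      hF.pathStar_cons_mul_pathProd_cons]
    by_cases hef : e = f
    · subst hef
      simp [hF.pathStar_mul_mul_pathProd hμ hν]
    · simp [hef]

open scoped Classical in
theorem mul_ite_rng (hF : IsQFamily Q P X Y) (e : Q.E) :
    X e * (if Q.r e ∈ W then 1 else P (Q.r e)) = X e := by
  split_ifs
  exacts [mul_one _, hF.mul_rng e]

theorem eq_sum_cons (hF : IsQFamily Q P X Y) {u : Q.V} (hreg : Q.IsRegular u)
    (t : Q.V → Finset (List Q.E))
    (ht : ∀ e, Q.s e = u → X e * ∑ ν ∈ t (Q.r e), pathProd X ν * pathStar Y ν = X e) :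
    P u = ∑ e ∈ hreg.2.toFinset, ∑ ν ∈ t (Q.r e),
      pathProd X (e :: ν) * pathStar Y (e :: ν) := by
  rw [hF.ck2 u hreg.2 hreg.1]
  refine Finset.sum_congr rfl fun e he => ?_
  calc X e * Y e = X e * (∑ ν ∈ t (Q.r e), pathProd X ν * pathStar Y ν) * Y e := by
        rw [ht e (by simpa using he)]
    _ = _ := by simp [Finset.mul_sum, Finset.sum_mul, mul_assoc]

variable [Fintype Q.V]

open scoped Classical in
theorem sum_firstHitSet (hF : IsQFamily Q P X Y) (hsing : ∀ v, v ∉ W → Q.IsRegular v)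
    (hcyc : Q.CyclesMeet W) (u : Q.V) :
    ∑ ν ∈ (finite_firstHitSet hsing hcyc u).toFinset, pathProd X ν * pathStar Y ν =
      if u ∈ W then 1 else P u := by
  induction u using hcyc.induction with
  | mem u hu =>
    have : (finite_firstHitSet hsing hcyc u).toFinset = {[]} := by
      ext; simp [firstHitSet_of_mem hu]
    simp [this, hu]
  | notMem u hu ih =>
    have : (finite_firstHitSet hsing hcyc u).toFinset = (hsing u hu).2.toFinset.biUnion
        fun e => (finite_firstHitSet hsing hcyc (Q.r e)).toFinset.image (List.cons e) := by
      ext; simp [firstHitSet_of_notMem hu]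
    rw [this, Finset.sum_biUnion_image_cons, if_neg hu,
      ← hF.eq_sum_cons (hsing u hu) (fun w => (finite_firstHitSet hsing hcyc w).toFinset)
        fun e he => by rw [ih e he, hF.mul_ite_rng]]

theorem mul_sum_firstHitSet (hF : IsQFamily Q P X Y) (hsing : ∀ v, v ∉ W → Q.IsRegular v)
    (hcyc : Q.CyclesMeet W) (e : Q.E) :
    X e * ∑ ν ∈ (finite_firstHitSet hsing hcyc (Q.r e)).toFinset, pathProd X ν * pathStar Y ν =
      X e := by
  classical
  rw [hF.sum_firstHitSet hsing hcyc, hF.mul_ite_rng]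

theorem cgRed (hF : IsQFamily Q P X Y) (hsing : ∀ v, v ∉ W → Q.IsRegular v)
    (hcyc : Q.CyclesMeet W) :
    IsQFamily (Q.CGred W) (fun v => P v.1) (fun μ => pathProd X μ.1)
      (fun μ => pathStar Y μ.1) where
  orth v w := by
    rw [hF.orth]
    exact if_congr Subtype.ext_iff.symm rfl rfl
  src_mul μ := hF.src_mul_pathProd μ.2.ne
  mul_rng μ := hF.pathProd_mul_rng μ.2.ne
  rng_mul μ := hF.rng_mul_pathStar μ.2.ne
  mul_src μ := hF.pathStar_mul_src μ.2.ne
  ck1 := by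
    rintro ⟨μ, hμ⟩ ⟨ν, hν⟩
    obtain ⟨e, μ, rfl⟩ := List.exists_cons_of_ne_nil hμ.ne
    obtain ⟨f, ν, rfl⟩ := List.exists_cons_of_ne_nil hν.ne
    simp only [Subtype.mk.injEq, List.cons.injEq]
    rw [hF.pathStar_cons_mul_pathProd_cons]
    by_cases hef : e = f
    · subst hef
      rw [hF.pathStar_mul_mul_pathProd (isCGPath_cons_iff.1 hμ).2 (isCGPath_cons_iff.1 hν).2]
      simp
    · simp [hef]
  ck2 v h hne := by
    have hreg := isRegular_of_finite_cgRed hsing hcyc h hne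
    have hfin := finite_firstHitSet hsing hcyc
    have hedges : h.toFinset.map (Function.Embedding.subtype _) =
        hreg.2.toFinset.biUnion fun e => (hfin (Q.r e)).toFinset.image (List.cons e) := by
      ext μ
      simpa [Subtype.ext_iff] using isCGPath_and_pathSrc_eq_iff v.2
    calc P v.1 = ∑ e ∈ hreg.2.toFinset, ∑ ν ∈ (hfin (Q.r e)).toFinset,
          pathProd X (e :: ν) * pathStar Y (e :: ν) :=
        hF.eq_sum_cons hreg (fun w => (hfin w).toFinset) fun e _ =>
          hF.mul_sum_firstHitSet hsing hcyc e
      _ = ∑ μ ∈ h.toFinset.map (Function.Embedding.subtype _),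
          pathProd X μ * pathStar Y μ := by
        rw [hedges, Finset.sum_biUnion_image_cons]
      _ = _ := Finset.sum_map _ _ _

end IsQFamily

end PathProducts

theorem isQFamily_lpa (k : Type) [Field k] (Q : Qvr) [Fintype Q.V] [DecidableEq Q.V]
    [DecidableEq Q.E] : IsQFamily Q (lv k Q) (le k Q) (lg k Q) := by
  have rel {a b c} (h : LRel k Q (a * b) c) :
      RingQuot.mkAlgHom k (LRel k Q) a * RingQuot.mkAlgHom k (LRel k Q) b =
        RingQuot.mkAlgHom k (LRel k Q) c :=
    (map_mul _ _ _).symm.trans (RingQuot.mkAlgHom_rel k h)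
  refine ⟨fun v w => ?_, fun e => rel (.src_edge e), fun e => rel (.edge_rng e),
    fun e => rel (.rng_ghost e), fun e => rel (.ghost_src e), fun e f => ?_, fun v h hne => ?_⟩
  · split_ifs with hvw
    · exact hvw ▸ rel (.idem v)
    · exact (rel (.orth v w hvw)).trans (map_zero _)
  · split_ifs with hef
    · exact hef ▸ rel (.ck1_eq e)
    · exact (rel (.ck1_ne e f hef)).trans (map_zero _)
  · refine (RingQuot.mkAlgHom_rel k (LRel.ck2 v h hne)).trans ?_
    simp only [map_sum, map_mul]
    rfl

/-- Under the hypotheses of the main theorem (finitely many vertices, all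
singular vertices in `W`, every cycle meets `W`), the assignments `q_v = v` for `v ∈ W` and
`T_{e_μ} = μ` (the product in `L_k(Q)` of the edges of `μ`) form a Cuntz–Krieger
`Q'`-family in `L_k(Q)`, where `Q'` is the Crisp–Gow reduction of `Q` relative to `W`. -/
theorem stmt4 (k : Type) [Field k] (Q : Qvr) [Fintype Q.V] [DecidableEq Q.V] [DecidableEq Q.E]
    (W : Set Q.V) (hsing : ∀ v : Q.V, v ∉ W → Q.IsRegular v) (hcyc : Q.CyclesMeet W) :
    IsQFamily (Qvr.CGred Q W)
      (fun v => lv k Q v.1)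
      (fun μ => pathProd (le k Q) μ.1)
      (fun μ => pathStar (lg k Q) μ.1) :=
  (isQFamily_lpa k Q).cgRed hsing hcyc
end

section
/- Let Q be a quiver with finitely many vertices such that all singular vertices lie in Q'⁰ ⊆ Q⁰ and every cycle of Q meets Q'⁰. Then Q⁰ equals the hereditary saturated closure of Q'⁰. -/
namespace Qvr

/-- `v ≥ w`: there is a (possibly trivial) path from `v` to `w`. -/
def Reaches (Q : Qvr) (v w : Q.V) : Prop :=
  v = w ∨ ∃ (μ : List Q.E) (h : μ ≠ []), Q.IsPath μ ∧ Q.pathSrc μ h = v ∧ Q.pathRng μ h = w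

/-- A set of vertices is hereditary if it is closed under reachability. -/
def Hereditary (Q : Qvr) (H : Set Q.V) : Prop :=
  ∀ v ∈ H, ∀ w : Q.V, Q.Reaches v w → w ∈ H

/-- A set of vertices is saturated if it contains every regular vertex all of whose
out-neighbours lie in it. -/
def Saturated (Q : Qvr) (H : Set Q.V) : Prop :=
  ∀ v : Q.V, Q.IsRegular v → (∀ e : Q.E, Q.s e = v → Q.r e ∈ H) → v ∈ H

/-- The hereditary saturated closure of a set of vertices: the smallest hereditary and
saturated subset containing it. -/
def hsClosure (Q : Qvr) (X : Set Q.V) : Set Q.V :=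
  ⋂₀ {H : Set Q.V | Q.Hereditary H ∧ Q.Saturated H ∧ X ⊆ H}

end Qvr

/-!
Let `H` be the closure. A vertex outside `H` is not in `W`, hence regular, so saturation of `H`
forces it to emit an edge whose range is again outside `H`. Following such edges inside the finite
set `Hᶜ` must eventually close up into a cycle, and that cycle misses `W ⊆ H`.
-/

theorem Function.nonempty_periodicPts {α : Type*} [Finite α] [Nonempty α] (f : α → α) :
    (Function.periodicPts f).Nonempty := by
  obtain ⟨x⟩ := ‹Nonempty α›
  obtain ⟨a, b, hab, hfab⟩ := Finite.exists_ne_map_eq_of_infinite (f^[·] x)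
  wlog hlt : a < b generalizing a b
  · exact this b a hab.symm hfab.symm (hab.lt_or_gt.resolve_left hlt)
  refine ⟨f^[a] x, b - a, Nat.sub_pos_of_lt hlt, ?_⟩
  change f^[b - a] (f^[a] x) = f^[a] x
  rw [← Function.iterate_add_apply, Nat.sub_add_cancel hlt.le, hfab]

namespace Qvr

variable {Q : Qvr}

theorem isCycle_periodicOrbit {α : Type*} {π : α → Q.V} (hπ : Function.Injective π)
    {g : α → α} {φ : α → Q.E} (hs : ∀ a, Q.s (φ a) = π a) (hr : ∀ a, Q.r (φ a) = π (g a))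
    {x : α} (hx : x ∈ Function.periodicPts g) :
    Q.IsCycle ((List.range (Function.minimalPeriod g x)).map fun k => φ (g^[k] x)) := by
  set n := Function.minimalPeriod g x
  have hn : 0 < n := Function.minimalPeriod_pos_of_mem_periodicPts hx
  have hne : (List.range n).map (fun k => φ (g^[k] x)) ≠ [] := by simp [hn.ne']
  refine ⟨hne, ?_, ?_, ?_⟩
  · rw [IsPath, List.Chain', List.isChain_map, List.isChain_range]
    intro k _
    rw [hr, hs, Function.iterate_succ_apply']
  · rw [pathRng, pathSrc, List.getLast_map, List.head_map, hr, hs, List.getLast_range,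
      List.head_range, ← Function.iterate_succ_apply' g, Nat.succ_eq_add_one, Nat.sub_add_cancel hn,
      Function.iterate_minimalPeriod, Function.iterate_zero_apply]
  · rw [List.map_map]
    refine List.Nodup.map_on (fun k hk l hl hkl => ?_) List.nodup_range
    simp only [Function.comp_apply, hs] at hkl
    exact Function.iterate_injOn_Iio_minimalPeriod (List.mem_range.1 hk) (List.mem_range.1 hl)
      (hπ hkl)

theorem exists_isCycle_of_forall_exists_edge [Finite Q.V] {S : Set Q.V} (hS : S.Nonempty)
    (h : ∀ v ∈ S, ∃ e, Q.s e = v ∧ Q.r e ∈ S) : ∃ μ, Q.IsCycle μ ∧ ∀ e ∈ μ, Q.s e ∈ S := by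
  choose φ hφs hφr using fun v : S => h v v.2
  let g : S → S := fun v => ⟨Q.r (φ v), hφr v⟩
  have : Nonempty S := hS.to_subtype
  obtain ⟨x, hx⟩ := Function.nonempty_periodicPts g
  refine ⟨_, isCycle_periodicOrbit Subtype.val_injective hφs (fun _ => rfl) hx, ?_⟩
  simp only [List.mem_map, List.mem_range]
  rintro _ ⟨k, -, rfl⟩
  simp [hφs]

theorem subset_hsClosure (X : Set Q.V) : X ⊆ Q.hsClosure X :=
  fun _ hx => Set.mem_sInter.2 fun _ hH => hH.2.2 hx

theorem saturated_hsClosure (X : Set Q.V) : Q.Saturated (Q.hsClosure X) :=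
  fun v hreg hall => Set.mem_sInter.2 fun H hH =>
    hH.2.1 v hreg fun e he => Set.mem_sInter.1 (hall e he) H hH

end Qvr

/-- If `Q` has finitely many vertices, all singular vertices lie in `W`,
and every cycle of `Q` meets `W`, then `Q⁰` equals the hereditary saturated closure of `W`. -/
theorem stmt5 (Q : Qvr) [Fintype Q.V] (W : Set Q.V)
    (hsing : ∀ v : Q.V, v ∉ W → Q.IsRegular v) (hcyc : Q.CyclesMeet W) :
    Q.hsClosure W = Set.univ := by
  set H := Q.hsClosure W
  have hWH : W ⊆ H := Q.subset_hsClosure W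
  have hleave : ∀ v ∈ Hᶜ, ∃ e, Q.s e = v ∧ Q.r e ∈ Hᶜ := by
    intro v hv
    by_contra! hstay
    refine hv (Q.saturated_hsClosure W v (hsing v fun hvW => hv (hWH hvW)) fun e he => ?_)
    exact not_not.1 (hstay e he)
  by_contra hH
  obtain ⟨μ, hμ, hμH⟩ := Q.exists_isCycle_of_forall_exists_edge (Set.nonempty_compl.2 hH) hleave
  obtain ⟨e, he, heW⟩ := hcyc μ hμ
  exact hμH e he (hWH heW)
end
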